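/- (Outer-loop complexity, convex case: function values.) Let f : ℝ^p → ℝ be convex, κ > 0, and let x* be a minimizer of f. Let (α_k)_{k ≥ 1} satisfy α_1 = 1, α_k ∈ (0,1] and (1 − α_{k+1})/α_{k+1}² = 1/α_k² for all k ≥ 1. Suppose sequences (x_k)_{k ≥ 0}, (v_k)_{k ≥ 0}, (y_k)_{k ≥ 1}, (x̃_k)_{k ≥ 1} in ℝ^p satisfy v_0 = x_0 and, for every k ≥ 1: (i) y_k = α_k v_{k−1} + (1 − α_k) x_{k−1}; (ii) there exists ξ_k ∈ ∂(f_κ(·; y_k))(x̃_k) with ‖ξ_k‖ ≤ (κ/(k+1))·‖x̃_k − y_k‖; (iii) v_k = x_{k−1} + (1/α_k)(x̃_k − x_{k−1}); (iv) f(x_k) ≤ f(x̃_k). Then for every integer N ≥ 1: f(x_N) − f(x*) ≤ (4κ/(N+1)²)·‖x* − x_0‖². -/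

import Mathlib

/-- `v` is a subgradient (in the sense of convex analysis) of `g` at `x`:
`g y ≥ g x + ⟨v, y − x⟩` for all `y`. -/
def CSubgradAt {p : ℕ} (g : EuclideanSpace ℝ (Fin p) → ℝ)
    (v x : EuclideanSpace ℝ (Fin p)) : Prop :=
  ∀ y : EuclideanSpace ℝ (Fin p), g x + (inner ℝ v (y - x) : ℝ) ≤ g y

/-- Strong-convexity-type inequality for a subgradient of the κ-regularized function. -/
lemma strong_subgrad {p : ℕ} (f : EuclideanSpace ℝ (Fin p) → ℝ)
    (hf : ConvexOn ℝ Set.univ f) (κ : ℝ) (hκ : 0 < κ)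
    (y ξ xt : EuclideanSpace ℝ (Fin p))
    (hsub : CSubgradAt (fun z => f z + κ / 2 * ‖z - y‖ ^ 2) ξ xt) :
    ∀ z, f xt + κ / 2 * ‖xt - y‖ ^ 2 + (inner ℝ ξ (z - xt) : ℝ) + κ / 2 * ‖z - xt‖ ^ 2
      ≤ f z + κ / 2 * ‖z - y‖ ^ 2 := by
  have hu : ∀ z, f xt + (inner ℝ (ξ - κ • (xt - y)) (z - xt) : ℝ) ≤ f z := by
    intro z
    set d := z - xt with hd
    set C := κ / 2 * ‖d‖ ^ 2 with hC
    have hC0 : 0 ≤ C := by positivity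
    have key : ∀ t : ℝ, 0 < t → t ≤ 1 →
        f xt + (inner ℝ (ξ - κ • (xt - y)) d : ℝ) ≤ f z + t * C := by
      intro t ht ht1
      have hw := hsub (xt + t • d)
      simp only [add_sub_cancel_left] at hw
      have hconv : f (xt + t • d) ≤ (1 - t) * f xt + t * f z := by
        have h2 := hf.2 (Set.mem_univ xt) (Set.mem_univ z)
          (show (0:ℝ) ≤ 1 - t by linarith) ht.le (show (1-t)+t = 1 by ring)
        simp only [smul_eq_mul] at h2
        have : (1 - t) • xt + t • z = xt + t • d := by
          rw [hd]; module
        rwa [this] at h2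
      have hnorm : ‖xt + t • d - y‖ ^ 2
          = ‖xt - y‖ ^ 2 + 2 * t * (inner ℝ (xt - y) d : ℝ) + t ^ 2 * ‖d‖ ^ 2 := by
        have : xt + t • d - y = (xt - y) + t • d := by abel
        rw [this, norm_add_sq_real, real_inner_smul_right, norm_smul,
          Real.norm_eq_abs, abs_of_pos ht]
        try ring
      have hi1 : (inner ℝ ξ (t • d) : ℝ) = t * (inner ℝ ξ d : ℝ) := real_inner_smul_right _ _ _
      have hi2 : (inner ℝ (ξ - κ • (xt - y)) d : ℝ)
          = (inner ℝ ξ d : ℝ) - κ * (inner ℝ (xt - y) d : ℝ) := by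
        rw [inner_sub_left, real_inner_smul_left]
      rw [hi1, hnorm] at hw
      have hmul : t * (f xt + (inner ℝ (ξ - κ • (xt - y)) d : ℝ)) ≤ t * (f z + t * C) := by
        rw [hi2, hC]
        nlinarith [hw, hconv]
      have := (mul_le_mul_iff_right₀ ht).mp hmul
      linarith
    refine le_of_forall_pos_le_add ?_
    intro ε hε
    have htpos : 0 < min 1 (ε / (C + 1)) := by
      apply lt_min one_pos; positivity
    have := key (min 1 (ε / (C + 1))) htpos (min_le_left _ _)
    have htC : min 1 (ε / (C + 1)) * C ≤ ε := by
      have h1 : min 1 (ε / (C + 1)) ≤ ε / (C + 1) := min_le_right _ _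
      have : min 1 (ε / (C + 1)) * C ≤ (ε / (C + 1)) * C := by
        apply mul_le_mul_of_nonneg_right h1 hC0
      have h2 : (ε / (C + 1)) * C ≤ ε := by
        rw [div_mul_eq_mul_div, div_le_iff₀ (by linarith)]
        nlinarith
      linarith
    linarith
  intro z
  have h1 := hu z
  have hnorm : ‖z - y‖ ^ 2
      = ‖xt - y‖ ^ 2 + 2 * (inner ℝ (xt - y) (z - xt) : ℝ) + ‖z - xt‖ ^ 2 := by
    have : z - y = (xt - y) + (z - xt) := by abel
    rw [this, norm_add_sq_real]
    try ring
  have hi2 : (inner ℝ (ξ - κ • (xt - y)) (z - xt) : ℝ)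
      = (inner ℝ ξ (z - xt) : ℝ) - κ * (inner ℝ (xt - y) (z - xt) : ℝ) := by
    rw [inner_sub_left, real_inner_smul_left]
  rw [hi2] at h1
  nlinarith [h1, hnorm]

/-- Bound `α k ≤ 2/(k+1)` for the Nesterov α-sequence. -/
lemma alpha_bound (α : ℕ → ℝ) (hα1 : α 1 = 1)
    (hαmem : ∀ k : ℕ, 1 ≤ k → α k ∈ Set.Ioc (0 : ℝ) 1)
    (hαrec : ∀ k : ℕ, 1 ≤ k → (1 - α (k + 1)) / (α (k + 1)) ^ 2 = 1 / (α k) ^ 2) :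
    ∀ k : ℕ, 1 ≤ k → α k ≤ 2 / ((k : ℝ) + 1) := by
  have hinv : ∀ k : ℕ, 1 ≤ k → ((k : ℝ) + 1) / 2 ≤ 1 / α k := by
    intro k hk
    induction k, hk using Nat.le_induction with
    | base => rw [hα1]; norm_num
    | succ k hk ih =>
      obtain ⟨ha0, ha1⟩ := hαmem k hk
      obtain ⟨hb0, hb1⟩ := hαmem (k + 1) (by omega)
      have hrec := hαrec k hk
      have hane : α k ≠ 0 := ne_of_gt ha0
      have hbne : α (k + 1) ≠ 0 := ne_of_gt hb0
      have ht2 : (1 / α (k + 1)) ^ 2 - 1 / α (k + 1) = (1 / α k) ^ 2 := by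
        have h2 : (1 - α (k+1)) * (α k)^2 = (α (k+1))^2 := by
          field_simp at hrec; linarith [hrec]
        field_simp
        nlinarith [h2]
      have hs1 : 1 ≤ 1 / α k := by rw [le_div_iff₀ ha0]; linarith
      have ht1 : 1 ≤ 1 / α (k + 1) := by rw [le_div_iff₀ hb0]; linarith
      have hstep : 1 / α k + 1 / 2 ≤ 1 / α (k + 1) := by
        nlinarith [ht2, hs1, ht1]
      push_cast
      linarith
  intro k hk
  obtain ⟨ha0, _⟩ := hαmem k hk
  have h1 : α k * (1 / α k) = 1 := by field_simp
  rw [le_div_iff₀ (by positivity : (0:ℝ) < (k:ℝ) + 1)]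
  nlinarith [hinv k hk, h1, ha0]

/-- Scalar combination step for one iteration. -/
lemma key_arith (κ M A a V1 Vm I Ft Fz Fs Fx : ℝ) (hκ : 0 < κ) (hM : 0 < M)
    (hs : Ft + κ / 2 * A ^ 2 + I + κ / 2 * (a * V1) ^ 2 ≤ Fz + κ / 2 * (a * Vm) ^ 2)
    (hib : -(κ * (1 / M) * A * (a * V1)) ≤ I)
    (hcz : Fz ≤ a * Fs + (1 - a) * Fx) :
    Ft - Fs + κ / 2 * (1 - (1 / M) ^ 2) * a ^ 2 * V1 ^ 2
      ≤ (1 - a) * (Fx - Fs) + κ / 2 * a ^ 2 * Vm ^ 2 := by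
  have young : κ * (1 / M) * A * (a * V1)
      ≤ κ / 2 * A ^ 2 + κ / 2 * (1 / M) ^ 2 * (a * V1) ^ 2 := by
    nlinarith [mul_nonneg (half_pos hκ).le (sq_nonneg (A - (1 / M) * (a * V1)))]
  nlinarith [hs, hib, hcz, young]

/-- Scalar potential decrease step. -/
lemma succ_step (κ k D δ V1 Vk W b ak : ℝ) (hκ : 0 < κ) (hk1 : 1 ≤ k)
    (hb0 : 0 < b) (ha0 : 0 < ak) (hδ0 : 0 ≤ δ)
    (e1 : (1 - b) * ak ^ 2 = b ^ 2)
    (hkey : D + κ / 2 * (1 - (1 / (k + 2)) ^ 2) * b ^ 2 * V1 ^ 2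
      ≤ (1 - b) * δ + κ / 2 * b ^ 2 * Vk ^ 2)
    (ih : (k + 1) / (2 * k) * (δ / ak ^ 2) + κ / 2 * ((k + 2) / (2 * (k + 1))) * Vk ^ 2
      ≤ κ / 2 * W) :
    (k + 1 + 1) / (2 * (k + 1)) * (D / b ^ 2)
      + κ / 2 * ((k + 1 + 2) / (2 * (k + 1 + 1))) * V1 ^ 2 ≤ κ / 2 * W := by
  have hb2 : (0 : ℝ) < b ^ 2 := by positivity
  have ha2 : (0 : ℝ) < ak ^ 2 := by positivity
  have hkpos : (0 : ℝ) < k := by linarith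
  have hk2 : (0 : ℝ) < k + 2 := by linarith
  have hk1' : (0 : ℝ) < k + 1 := by linarith
  have hq : δ / ak ^ 2 * b ^ 2 = (1 - b) * δ := by
    rw [div_mul_eq_mul_div, div_eq_iff ha2.ne']
    linear_combination -δ * e1
  have h0 : D + κ / 2 * (1 - (1 / (k + 2)) ^ 2) * V1 ^ 2 * b ^ 2
      ≤ (δ / ak ^ 2 + κ / 2 * Vk ^ 2) * b ^ 2 := by
    rw [add_mul, hq]; nlinarith [hkey]
  have h1 : D / b ^ 2 + κ / 2 * (1 - (1 / (k + 2)) ^ 2) * V1 ^ 2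
      ≤ δ / ak ^ 2 + κ / 2 * Vk ^ 2 := by
    have c1 : D / b ^ 2 + κ / 2 * (1 - (1 / (k + 2)) ^ 2) * V1 ^ 2
        = (D + κ / 2 * (1 - (1 / (k + 2)) ^ 2) * V1 ^ 2 * b ^ 2) / b ^ 2 := by
      rw [eq_div_iff hb2.ne', add_mul, div_mul_cancel₀ _ hb2.ne']
    rw [c1]
    calc (D + κ / 2 * (1 - (1 / (k + 2)) ^ 2) * V1 ^ 2 * b ^ 2) / b ^ 2
        ≤ ((δ / ak ^ 2 + κ / 2 * Vk ^ 2) * b ^ 2) / b ^ 2 := by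
          exact (div_le_div_iff_of_pos_right hb2).mpr h0
      _ = δ / ak ^ 2 + κ / 2 * Vk ^ 2 := mul_div_cancel_right₀ _ hb2.ne'
  have hc'0 : (0 : ℝ) < (k + 2) / (2 * (k + 1)) := by positivity
  have h2 := mul_le_mul_of_nonneg_left h1 hc'0.le
  have h5 : (k + 2) / (2 * (k + 1)) * (κ / 2 * (1 - (1 / (k + 2)) ^ 2) * V1 ^ 2)
      = κ / 2 * ((k + 3) / (2 * (k + 2))) * V1 ^ 2 := by
    field_simp
    ring
  have h3 : (k + 2) / (2 * (k + 1)) * (δ / ak ^ 2)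
      ≤ (k + 1) / (2 * k) * (δ / ak ^ 2) := by
    have hck : (k + 2) / (2 * (k + 1)) ≤ (k + 1) / (2 * k) := by
      rw [div_le_div_iff₀ (by positivity) (by positivity)]
      nlinarith
    exact mul_le_mul_of_nonneg_right hck (by positivity)
  have e3 : (k + 1 + 1) / (2 * (k + 1)) = (k + 2) / (2 * (k + 1)) := by ring
  have e4 : (k + 1 + 2) / (2 * (k + 1 + 1)) = (k + 3) / (2 * (k + 2)) := by ring
  rw [e3, e4]
  linarith [h2, h3, h5, ih]

/-- Final scalar assembly. -/
lemma final_step (κ n δ V0 aN : ℝ) (hκ : 0 < κ) (hn1 : 1 ≤ n)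
    (hδ0 : 0 ≤ δ) (haN0 : 0 < aN) (haN : aN ≤ 2 / (n + 1))
    (hmain : (n + 1) / (2 * n) * (δ / aN ^ 2) ≤ κ / 2 * V0 ^ 2) :
    δ ≤ 4 * κ / (n + 1) ^ 2 * V0 ^ 2 := by
  have hn0 : (0 : ℝ) < n := by linarith
  have hn1' : (0 : ℝ) < n + 1 := by linarith
  have ha2 : (0 : ℝ) < aN ^ 2 := by positivity
  have hc : (0 : ℝ) < (n + 1) / (2 * n) := by positivity
  have t1 : δ / aN ^ 2 ≤ (κ / 2 * V0 ^ 2) / ((n + 1) / (2 * n)) := by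
    rw [le_div_iff₀ hc]; linarith [hmain]
  have t2 : δ ≤ (κ / 2 * V0 ^ 2) / ((n + 1) / (2 * n)) * aN ^ 2 := by
    have := (div_le_iff₀ ha2).mp t1
    linarith
  have hR : (κ / 2 * V0 ^ 2) / ((n + 1) / (2 * n)) = κ * n / (n + 1) * V0 ^ 2 := by
    field_simp
  rw [hR] at t2
  have haN2 : aN ^ 2 ≤ 4 / (n + 1) ^ 2 := by
    have h2 : (0 : ℝ) < 2 / (n + 1) := by positivity
    have := mul_le_mul haN haN haN0.le h2.le
    calc aN ^ 2 = aN * aN := sq aN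
      _ ≤ 2 / (n + 1) * (2 / (n + 1)) := this
      _ = 4 / (n + 1) ^ 2 := by field_simp; ring
  have hfin : κ * n / (n + 1) * V0 ^ 2 * aN ^ 2 ≤ 4 * κ / (n + 1) ^ 2 * V0 ^ 2 := by
    have h1 : κ * n / (n + 1) * V0 ^ 2 * aN ^ 2 = κ * n * V0 ^ 2 * aN ^ 2 / (n + 1) := by ring
    have h2 : 4 * κ / (n + 1) ^ 2 * V0 ^ 2 = 4 * κ * V0 ^ 2 / (n + 1) ^ 2 := by ring
    rw [h1, h2, div_le_div_iff₀ (by positivity) (by positivity)]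
    have haN2' : aN ^ 2 * (n + 1) ^ 2 ≤ 4 :=
      (le_div_iff₀ (by positivity : (0:ℝ) < (n + 1) ^ 2)).mp haN2
    nlinarith [mul_le_mul_of_nonneg_left haN2' (show (0:ℝ) ≤ κ * n * V0 ^ 2 by positivity),
      mul_nonneg hκ.le (sq_nonneg V0)]
  linarith

/-- Outer-loop complexity, convex case: function values. -/
theorem outer_loop_complexity_convex_values (p : ℕ) (hp : 0 < p)
    (f : EuclideanSpace ℝ (Fin p) → ℝ) (hf : ConvexOn ℝ Set.univ f)
    (κ : ℝ) (hκ : 0 < κ)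
    (xstar : EuclideanSpace ℝ (Fin p)) (hxstar : ∀ z, f xstar ≤ f z)
    (α : ℕ → ℝ) (hα1 : α 1 = 1)
    (hαmem : ∀ k : ℕ, 1 ≤ k → α k ∈ Set.Ioc (0 : ℝ) 1)
    (hαrec : ∀ k : ℕ, 1 ≤ k → (1 - α (k + 1)) / (α (k + 1)) ^ 2 = 1 / (α k) ^ 2)
    (x v y xtil : ℕ → EuclideanSpace ℝ (Fin p))
    (hv0 : v 0 = x 0)
    (hy : ∀ k : ℕ, 1 ≤ k → y k = α k • v (k - 1) + (1 - α k) • x (k - 1))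
    (hxtil : ∀ k : ℕ, 1 ≤ k → ∃ ξ : EuclideanSpace ℝ (Fin p),
      CSubgradAt (fun z => f z + κ / 2 * ‖z - y k‖ ^ 2) ξ (xtil k) ∧
        ‖ξ‖ ≤ κ / ((k : ℝ) + 1) * ‖xtil k - y k‖)
    (hvk : ∀ k : ℕ, 1 ≤ k → v k = x (k - 1) + (α k)⁻¹ • (xtil k - x (k - 1)))
    (hbest : ∀ k : ℕ, 1 ≤ k → f (x k) ≤ f (xtil k)) :
    ∀ N : ℕ, 1 ≤ N →
      f (x N) - f xstar ≤ 4 * κ / ((N : ℝ) + 1) ^ 2 * ‖xstar - x 0‖ ^ 2 := by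
  -- Per-iteration inequality
  have key : ∀ m : ℕ,
      f (xtil (m + 1)) - f xstar
        + κ / 2 * (1 - (1 / ((m : ℝ) + 2)) ^ 2) * (α (m + 1)) ^ 2 * ‖xstar - v (m + 1)‖ ^ 2
      ≤ (1 - α (m + 1)) * (f (x m) - f xstar)
        + κ / 2 * (α (m + 1)) ^ 2 * ‖xstar - v m‖ ^ 2 := by
    intro m
    obtain ⟨ha0, ha1⟩ := hαmem (m + 1) (by omega)
    obtain ⟨ξ, hξsub, hξn⟩ := hxtil (m + 1) (by omega)
    have hym := hy (m + 1) (by omega)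
    simp only [Nat.add_sub_cancel] at hym
    have hvm := hvk (m + 1) (by omega)
    simp only [Nat.add_sub_cancel] at hvm
    set z := α (m + 1) • xstar + (1 - α (m + 1)) • x m with hzdef
    -- vector identities
    have hzy : z - y (m + 1) = α (m + 1) • (xstar - v m) := by
      rw [hzdef, hym]; module
    have hzx : z - xtil (m + 1) = α (m + 1) • (xstar - v (m + 1)) := by
      have h' : α (m + 1) • v (m + 1) = α (m + 1) • x m + (xtil (m + 1) - x m) := by
        rw [hvm, smul_add, smul_inv_smul₀ (ne_of_gt ha0)]
      have hxt : xtil (m + 1) = α (m + 1) • v (m + 1) - α (m + 1) • x m + x m := by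
        rw [h']; abel
      rw [hzdef, hxt]; module
    have hnzy : ‖z - y (m + 1)‖ = α (m + 1) * ‖xstar - v m‖ := by
      rw [hzy, norm_smul, Real.norm_eq_abs, abs_of_pos ha0]
    have hnzx : ‖z - xtil (m + 1)‖ = α (m + 1) * ‖xstar - v (m + 1)‖ := by
      rw [hzx, norm_smul, Real.norm_eq_abs, abs_of_pos ha0]
    -- strong inequality at z
    have hs := strong_subgrad f hf κ hκ (y (m + 1)) ξ (xtil (m + 1)) hξsub z
    rw [hnzy, hnzx] at hs
    -- error bound on the inner product
    have hξn' : ‖ξ‖ ≤ κ * (1 / ((m : ℝ) + 2)) * ‖xtil (m + 1) - y (m + 1)‖ := by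
      have hMe : κ / ((↑(m + 1) : ℝ) + 1) = κ * (1 / ((m : ℝ) + 2)) := by
        push_cast; ring
      rwa [hMe] at hξn
    have hib : -(κ * (1 / ((m : ℝ) + 2)) * ‖xtil (m + 1) - y (m + 1)‖
          * (α (m + 1) * ‖xstar - v (m + 1)‖))
        ≤ (inner ℝ ξ (z - xtil (m + 1)) : ℝ) := by
      have h6 : ‖ξ‖ * (α (m + 1) * ‖xstar - v (m + 1)‖)
          ≤ κ * (1 / ((m : ℝ) + 2)) * ‖xtil (m + 1) - y (m + 1)‖
            * (α (m + 1) * ‖xstar - v (m + 1)‖) :=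
        mul_le_mul_of_nonneg_right hξn' (by positivity)
      have h7 := abs_real_inner_le_norm ξ (z - xtil (m + 1))
      rw [hnzx] at h7
      have h8 := neg_abs_le (inner ℝ ξ (z - xtil (m + 1)) : ℝ)
      linarith
    -- convexity at z
    have hcz : f z ≤ α (m + 1) * f xstar + (1 - α (m + 1)) * f (x m) := by
      have h2 := hf.2 (Set.mem_univ xstar) (Set.mem_univ (x m))
        ha0.le (show (0:ℝ) ≤ 1 - α (m + 1) by linarith) (show α (m+1) + (1 - α (m+1)) = 1 by ring)
      rw [hzdef]
      simpa using h2
    exact key_arith κ ((m : ℝ) + 2) ‖xtil (m + 1) - y (m + 1)‖ (α (m + 1))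
      ‖xstar - v (m + 1)‖ ‖xstar - v m‖ (inner ℝ ξ (z - xtil (m + 1)))
      (f (xtil (m + 1))) (f z) (f xstar) (f (x m)) hκ (by positivity) hs hib hcz
  -- potential induction
  have hδ : ∀ n : ℕ, 0 ≤ f (x n) - f xstar := fun n => sub_nonneg.2 (hxstar _)
  have main : ∀ N : ℕ, 1 ≤ N →
      ((N : ℝ) + 1) / (2 * (N : ℝ)) * ((f (x N) - f xstar) / (α N) ^ 2)
        + κ / 2 * (((N : ℝ) + 2) / (2 * ((N : ℝ) + 1))) * ‖xstar - v N‖ ^ 2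
      ≤ κ / 2 * ‖xstar - x 0‖ ^ 2 := by
    intro N hN
    induction N, hN using Nat.le_induction with
    | base =>
      have hk := key 0
      rw [hα1, hv0] at hk
      have hb := hbest 1 le_rfl
      push_cast
      rw [hα1]
      norm_num at hk ⊢
      linarith
    | succ k hk ih =>
      obtain ⟨ha0, ha1⟩ := hαmem k hk
      obtain ⟨hb0, hb1⟩ := hαmem (k + 1) (by omega)
      have hrec := hαrec k hk
      have e1 : (1 - α (k + 1)) * (α k) ^ 2 = (α (k + 1)) ^ 2 := by
        have hane : α k ≠ 0 := ne_of_gt ha0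
        have hbne : α (k + 1) ≠ 0 := ne_of_gt hb0
        field_simp at hrec; linarith [hrec]
      have hkey := key k
      have hbest' := hbest (k + 1) (by omega)
      have hkey' : f (x (k + 1)) - f xstar
          + κ / 2 * (1 - (1 / ((k : ℝ) + 2)) ^ 2) * (α (k + 1)) ^ 2 * ‖xstar - v (k + 1)‖ ^ 2
          ≤ (1 - α (k + 1)) * (f (x k) - f xstar)
            + κ / 2 * (α (k + 1)) ^ 2 * ‖xstar - v k‖ ^ 2 := by
        linarith [hkey]
      have hk1 : (1 : ℝ) ≤ (k : ℝ) := by exact_mod_cast hk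
      have hstep := succ_step κ (k : ℝ) (f (x (k + 1)) - f xstar) (f (x k) - f xstar)
        ‖xstar - v (k + 1)‖ ‖xstar - v k‖ (‖xstar - x 0‖ ^ 2) (α (k + 1)) (α k)
        hκ hk1 hb0 ha0 (hδ k) e1 hkey' ih
      push_cast
      convert hstep using 2 <;> push_cast <;> ring
  -- final assembly
  intro N hN
  have hmain := main N hN
  obtain ⟨haN0, _⟩ := hαmem N hN
  have haN := alpha_bound α hα1 hαmem hαrec N hN
  have hn1 : (1 : ℝ) ≤ (N : ℝ) := by exact_mod_cast hN
  have hVN0 : 0 ≤ κ / 2 * (((N : ℝ) + 2) / (2 * ((N : ℝ) + 1))) * ‖xstar - v N‖ ^ 2 := by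
    positivity
  have main' : ((N : ℝ) + 1) / (2 * (N : ℝ)) * ((f (x N) - f xstar) / (α N) ^ 2)
      ≤ κ / 2 * ‖xstar - x 0‖ ^ 2 := by linarith
  exact final_step κ (N : ℝ) (f (x N) - f xstar) ‖xstar - x 0‖ (α N)
    hκ hn1 (hδ N) haN0 haN main'
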